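/- arXiv:2509.00302 — 4 statements merged into one kernel-verified Lean document; each statement's English description precedes it below -/
import Mathlib

section
/- Let q be a prime power and let r ≥ 1, δ ≥ 2 be integers. Let C be a linear code over F_q with parameters [n,k,d]_q that is an optimal (r,δ)-LRC and satisfies d/n ≤ 2/3. Then d ≤ ((r+δ−1)(r+1) + δ(δ−1))/r · q. -/
/-- The Hamming weight of a vector: the number of nonzero coordinates. -/
def hammingWt {F : Type*} [Zero F] [DecidableEq F] {n : ℕ} (v : Fin n → F) : ℕ :=
  (Finset.univ.filter (fun i => v i ≠ 0)).card

/-- The minimum distance of the linear code `C` is at least `d`. -/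
def MinDistGe {F : Type*} [Field F] [DecidableEq F] {n : ℕ}
    (C : Submodule F (Fin n → F)) (d : ℕ) : Prop :=
  ∀ c ∈ C, c ≠ 0 → d ≤ hammingWt c

/-- The minimum distance of the linear code `C` is exactly `d`. -/
def MinDistEq {F : Type*} [Field F] [DecidableEq F] {n : ℕ}
    (C : Submodule F (Fin n → F)) (d : ℕ) : Prop :=
  MinDistGe C d ∧ ∃ c ∈ C, c ≠ 0 ∧ hammingWt c = d

/-- `C` is an `(r, δ)`-locally repairable code: every coordinate `i` has a repair
group `R` containing `i`, of size at most `r + δ - 1`, such that the punctured code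
`C|_R` has minimum distance at least `δ` (i.e. every codeword whose restriction to
`R` is nonzero has at least `δ` nonzero coordinates inside `R`). -/
def IsLRC {F : Type*} [Field F] [DecidableEq F] {n : ℕ}
    (C : Submodule F (Fin n → F)) (r δ : ℕ) : Prop :=
  ∀ i : Fin n, ∃ R : Finset (Fin n), i ∈ R ∧ R.card ≤ r + δ - 1 ∧
    ∀ c ∈ C, (∃ j ∈ R, c j ≠ 0) → δ ≤ (R.filter (fun j => c j ≠ 0)).card

/-- The parameters `[n, k, d]` attain the Singleton-type bound for `(r, δ)`-LRCs:
`d = n - k + 1 - (⌈k/r⌉ - 1)(δ - 1)`  (here `⌈k/r⌉ = (k + r - 1)/r`). -/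
def SingletonOptimal (n k d r δ : ℕ) : Prop :=
  (d : ℤ) = (n : ℤ) - (k : ℤ) + 1 - ((((k + r - 1) / r : ℕ) : ℤ) - 1) * ((δ : ℤ) - 1)

/-- There exists an optimal `(r, δ)`-LRC over `F` with parameters `[n, k, d]`. -/
def ExistsOptimalLRC (F : Type*) [Field F] [DecidableEq F] (n k d r δ : ℕ) : Prop :=
  ∃ C : Submodule F (Fin n → F),
    Module.finrank F C = k ∧ MinDistEq C d ∧ IsLRC C r δ ∧ SingletonOptimal n k d r δ

/-!
A repair group `R` reaching outside a set `V` of coordinates can be added to `V`: the subcode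
vanishing on `V ∪ R` is at most `#(R \ V) - min (#(R \ V)) (δ - 1)` dimensions smaller than
the one vanishing on `V`, because a codeword vanishing on all but `δ - 1` coordinates of `R`
vanishes on `R`. Adding repair groups greedily, the Singleton-type equality yields a set `S`
of `n - (d + δ - 1 + x)` coordinates, `x = ⌈(δ - 1)² / r⌉`, on which a subcode of dimension
at least `2` vanishes (`d / n ≤ 2 / 3` leaves room for `S` unless `d` is small, and then the
bound is trivial). That subcode lives on `N = d + δ - 1 + x` coordinates, so averaging the
weights of its codewords (Plotkin) gives `d (q + 1) ≤ N q`, i.e. `d ≤ (δ - 1 + x) q`; finally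
`(δ - 1 + x) r ≤ (r + δ - 1)(r + 1) + δ (δ - 1)`.
-/

open Finset Module

theorem Submodule.finrank_le_finrank_inf_ker_add {K V W : Type*} [DivisionRing K]
    [AddCommGroup V] [Module K V] [AddCommGroup W] [Module K W] [FiniteDimensional K V]
    [FiniteDimensional K W] (P : Submodule K V) (f : V →ₗ[K] W) :
    finrank K P ≤ finrank K ↥(P ⊓ LinearMap.ker f) + finrank K W := by
  have hker : finrank K ↥(LinearMap.ker (f.domRestrict P)) = finrank K ↥(P ⊓ LinearMap.ker f) := by
    rw [LinearMap.ker_domRestrict, ← Submodule.map_comap_subtype,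
      Submodule.finrank_map_subtype_eq]
  have := (f.domRestrict P).finrank_range_add_finrank_ker
  have := Submodule.finrank_le (LinearMap.range (f.domRestrict P))
  omega

theorem LinearMap.card_filter_ne_zero_le {K V : Type*} [Field K] [Fintype K] [DecidableEq K]
    [AddCommGroup V] [Module K V] [Fintype V] (φ : V →ₗ[K] K) :
    #{v | φ v ≠ 0} ≤ Fintype.card K ^ finrank K V - Fintype.card K ^ (finrank K V - 1) := by
  classical
  have hrank : finrank K V - 1 ≤ finrank K (ker φ) := by
    have := φ.finrank_range_add_finrank_ker
    have := Submodule.finrank_le (range φ)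
    rw [finrank_self] at this
    omega
  have hker : Fintype.card K ^ (finrank K V - 1) ≤ #{v | φ v = 0} := by
    calc Fintype.card K ^ (finrank K V - 1) ≤ Fintype.card K ^ finrank K (ker φ) :=
          Nat.pow_le_pow_right Fintype.card_pos hrank
      _ = Fintype.card (ker φ) := Module.card_eq_pow_finrank.symm
      _ = #{v | φ v = 0} := by
          rw [← Fintype.card_subtype]
          exact Fintype.card_congr (Equiv.subtypeEquivRight fun v => mem_ker)
  have := card_filter_add_card_filter_not (s := univ) (p := fun v => φ v ≠ 0)
  simp only [not_not, card_univ, Module.card_eq_pow_finrank (K := K) (V := V)] at this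
  omega

theorem mul_add_one_le_of_mul_pow_sub_one_le {d N q m : ℕ} (hq : 2 ≤ q) (hm : 2 ≤ m)
    (h : d * (q ^ m - 1) ≤ N * (q ^ m - q ^ (m - 1))) : d * (q + 1) ≤ N * q := by
  obtain ⟨j, rfl⟩ : ∃ j, m = j + 2 := ⟨m - 2, by omega⟩
  have ht : 1 ≤ q ^ j := Nat.one_le_pow _ _ (by omega)
  rw [show j + 2 - 1 = j + 1 by omega, pow_succ, pow_succ] at h
  generalize q ^ j = t at h ht
  have h1 : 1 ≤ t * q * q := Nat.mul_pos (Nat.mul_pos ht (by omega)) (by omega)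
  have h2 : t * q ≤ t * q * q := Nat.le_mul_of_pos_right _ (by omega)
  zify [h1, h2] at h
  by_contra! hlt
  have hlt' : (N : ℤ) * q + 1 ≤ d * (q + 1) := by exact_mod_cast hlt
  have hqz : (2 : ℤ) ≤ q := by exact_mod_cast hq
  have htz : (1 : ℤ) ≤ t := by exact_mod_cast ht
  nlinarith [mul_le_mul_of_nonneg_left hlt' (by nlinarith : (0 : ℤ) ≤ t * (q - 1))]

theorem Nat.mul_ceilDiv_sub_one_lt {k r : ℕ} (hk : 0 < k) (hr : 0 < r) : r * (k ⌈/⌉ r - 1) < k := by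
  have hpos : 0 < k ⌈/⌉ r := by
    by_contra! h
    have := (ceilDiv_le_iff_le_mul hr).1 h
    omega
  by_contra! h
  have := (ceilDiv_le_iff_le_mul hr).2 h
  omega

theorem sub_one_add_ceilDiv_le {r δ : ℕ} (hr : 1 ≤ r) (hδ : 2 ≤ δ) :
    ((δ - 1 + (δ - 1) ^ 2 ⌈/⌉ r : ℕ) : ℚ) ≤
      (((r : ℚ) + δ - 1) * (r + 1) + δ * (δ - 1)) / r := by
  have hxr : ((((δ - 1) ^ 2 ⌈/⌉ r) * r : ℕ) : ℚ) ≤ (((δ - 1) ^ 2 + r - 1 : ℕ) : ℚ) := by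
    exact_mod_cast Nat.div_mul_le_self _ _
  push_cast [Nat.cast_sub (by omega : 1 ≤ δ), Nat.cast_sub (by omega : 1 ≤ (δ - 1) ^ 2 + r)]
    at hxr ⊢
  have hrQ : (1 : ℚ) ≤ r := by exact_mod_cast hr
  have hδQ : (2 : ℚ) ≤ δ := by exact_mod_cast hδ
  rw [le_div_iff₀ (by positivity)]
  nlinarith

theorem SingletonOptimal.add_eq {n k d r δ : ℕ} (hopt : SingletonOptimal n k d r δ) (hk : 0 < k)
    (hr : 0 < r) (hδ : 0 < δ) : d + k + (k ⌈/⌉ r - 1) * (δ - 1) = n + 1 := by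
  have hm : 1 ≤ k ⌈/⌉ r := by
    by_contra! h
    have := (ceilDiv_le_iff_le_mul hr).1 (Nat.lt_one_iff.1 h).le
    omega
  unfold SingletonOptimal at hopt
  rw [← Nat.ceilDiv_eq_add_pred_div,
    show ((k ⌈/⌉ r : ℕ) : ℤ) = ((k ⌈/⌉ r - 1 : ℕ) : ℤ) + 1 by omega] at hopt
  zify [hδ]
  linarith

theorem MinDistGe.mono {F : Type*} [Field F] [DecidableEq F] {n d : ℕ}
    {C D : Submodule F (Fin n → F)} (hC : MinDistGe C d) (hDC : D ≤ C) : MinDistGe D d :=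
  fun c hc => hC c (hDC hc)

theorem MinDistGe.mul_pow_sub_one_le {F : Type*} [Field F] [Fintype F] [DecidableEq F] {n d : ℕ}
    {D : Submodule F (Fin n → F)} (hd : MinDistGe D d) {W : Finset (Fin n)}
    (hW : ∀ c ∈ D, ∀ i ∉ W, c i = 0) :
    d * (Fintype.card F ^ finrank F D - 1) ≤
      #W * (Fintype.card F ^ finrank F D - Fintype.card F ^ (finrank F D - 1)) := by
  classical
  have hdouble : ∑ c : D, hammingWt (c : Fin n → F) = ∑ i, #{c : D | (c : Fin n → F) i ≠ 0} := by
    simp only [hammingWt, card_filter]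
    exact sum_comm
  have hlower : d * (Fintype.card F ^ finrank F D - 1) ≤ ∑ c : D, hammingWt (c : Fin n → F) := by
    calc d * (Fintype.card F ^ finrank F D - 1) = ∑ _c ∈ univ.erase (0 : D), d := by
          rw [sum_const, card_erase_of_mem (mem_univ _), card_univ,
            Module.card_eq_pow_finrank (K := F) (V := D), smul_eq_mul, Nat.mul_comm]
      _ ≤ ∑ c ∈ univ.erase (0 : D), hammingWt (c : Fin n → F) :=
          sum_le_sum fun c hc => hd c c.2 (by simpa using ne_of_mem_erase hc)
      _ ≤ ∑ c : D, hammingWt (c : Fin n → F) := sum_le_sum_of_subset (erase_subset _ _)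
  have hupper : ∑ i, #{c : D | (c : Fin n → F) i ≠ 0} ≤
      #W * (Fintype.card F ^ finrank F D - Fintype.card F ^ (finrank F D - 1)) := by
    rw [← sum_subset (subset_univ W) fun i _ hi => ?_]
    · exact sum_le_card_nsmul _ _ _ fun i _ =>
        ((LinearMap.proj i).comp D.subtype).card_filter_ne_zero_le
    · simp only [card_eq_zero, filter_eq_empty_iff, not_not]
      exact fun c _ => hW c c.2 i hi
  omega

section VanishingSubcode

variable {F : Type*} [Field F] {n : ℕ}

def vanishingSubcode (C : Submodule F (Fin n → F)) (S : Finset (Fin n)) :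
    Submodule F (Fin n → F) :=
  C ⊓ LinearMap.ker (LinearMap.funLeft F F ((↑) : S → Fin n))

variable {C : Submodule F (Fin n → F)}

theorem mem_vanishingSubcode {S : Finset (Fin n)} {c : Fin n → F} :
    c ∈ vanishingSubcode C S ↔ c ∈ C ∧ ∀ i ∈ S, c i = 0 := by
  simp [vanishingSubcode, funext_iff, LinearMap.funLeft_apply]

theorem vanishingSubcode_le (S : Finset (Fin n)) : vanishingSubcode C S ≤ C :=
  inf_le_left

theorem vanishingSubcode_empty : vanishingSubcode C ∅ = C := by
  ext c; simp [mem_vanishingSubcode]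

theorem vanishingSubcode_eq_inf {V S : Finset (Fin n)} (h : V ⊆ S) :
    vanishingSubcode C S =
      vanishingSubcode C V ⊓ LinearMap.ker (LinearMap.funLeft F F ((↑) : ↥(S \ V) → Fin n)) := by
  ext c
  simp only [Submodule.mem_inf, mem_vanishingSubcode, LinearMap.mem_ker, funext_iff,
    LinearMap.funLeft_apply, Pi.zero_apply, Subtype.forall, mem_sdiff]
  constructor
  · rintro ⟨hc, hS⟩
    exact ⟨⟨hc, fun i hi => hS i (h hi)⟩, fun i hi => hS i hi.1⟩
  · rintro ⟨⟨hc, hV⟩, hSV⟩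
    exact ⟨hc, fun i hi => if hiV : i ∈ V then hV i hiV else hSV i ⟨hi, hiV⟩⟩

theorem finrank_vanishingSubcode_le {V S : Finset (Fin n)} (h : V ⊆ S) :
    finrank F (vanishingSubcode C V) ≤ finrank F (vanishingSubcode C S) + #(S \ V) := by
  have := (vanishingSubcode C V).finrank_le_finrank_inf_ker_add
    (LinearMap.funLeft F F ((↑) : ↥(S \ V) → Fin n))
  rwa [← vanishingSubcode_eq_inf h, Module.finrank_fintype_fun_eq_card, Fintype.card_coe] at this

theorem vanishingSubcode_sdiff_eq [DecidableEq F] {R S D : Finset (Fin n)} {δ : ℕ}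
    (hR : ∀ c ∈ C, (∃ j ∈ R, c j ≠ 0) → δ ≤ #(R.filter fun j => c j ≠ 0))
    (hRS : R ⊆ S) (hDR : D ⊆ R) (hD : #D < δ) :
    vanishingSubcode C (S \ D) = vanishingSubcode C S := by
  refine le_antisymm (fun c hc => ?_) (fun c hc => ?_)
  · rw [mem_vanishingSubcode] at hc ⊢
    refine ⟨hc.1, fun j hj => ?_⟩
    by_contra hcj
    have hsupp : R.filter (fun j => c j ≠ 0) ⊆ D := fun i hi => by
      rw [mem_filter] at hi
      by_contra hiD
      exact hi.2 (hc.2 i (mem_sdiff.2 ⟨hRS hi.1, hiD⟩))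
    have hjD : j ∈ D := by
      by_contra hjD
      exact hcj (hc.2 j (mem_sdiff.2 ⟨hj, hjD⟩))
    have := hR c hc.1 ⟨j, hDR hjD, hcj⟩
    have := card_le_card hsupp
    omega
  · rw [mem_vanishingSubcode] at hc ⊢
    exact ⟨hc.1, fun j hj => hc.2 j (mem_sdiff.1 hj).1⟩

theorem exists_vanishingSubcode_grow [DecidableEq F] {r δ : ℕ} (hδ : 2 ≤ δ)
    (hlrc : IsLRC C r δ) {V : Finset (Fin n)} (hV : V ≠ univ) :
    ∃ V' : Finset (Fin n), ∃ t, 1 ≤ t ∧ t ≤ δ - 1 ∧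
      (δ - 1) * #V' ≤ (δ - 1) * #V + t * (r + δ - 1) ∧
      finrank F (vanishingSubcode C V) + #V + t ≤ finrank F (vanishingSubcode C V') + #V' := by
  obtain ⟨i, hi⟩ : ∃ i, i ∉ V := by
    by_contra! h
    exact hV (eq_univ_iff_forall.2 h)
  obtain ⟨R, hiR, hRcard, hR⟩ := hlrc i
  set s := #(R \ V)
  have hs : 1 ≤ s := card_pos.2 ⟨i, mem_sdiff.2 ⟨hiR, hi⟩⟩
  have hsR : s ≤ r + δ - 1 := (card_le_card sdiff_subset).trans hRcard
  have hunion : #(V ∪ R) = #V + s := by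
    rw [union_comm, ← card_sdiff_add_card]; omega
  obtain ⟨D, hDsub, hDcard⟩ := exists_subset_card_eq (min_le_left s (δ - 1))
  refine ⟨V ∪ R, #D, by omega, by omega, ?_, ?_⟩
  · rw [hunion, Nat.mul_add, hDcard]
    refine Nat.add_le_add_left ?_ _
    rcases le_total s (δ - 1) with h | h
    · rw [min_eq_left h, Nat.mul_comm]
      exact Nat.mul_le_mul_left _ (by omega)
    · rw [min_eq_right h]
      exact Nat.mul_le_mul_left _ hsR
  · have hsub : V ⊆ (V ∪ R) \ D := fun j hj =>
      mem_sdiff.2 ⟨mem_union_left _ hj, fun hjD => (mem_sdiff.1 (hDsub hjD)).2 hj⟩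
    have key := finrank_vanishingSubcode_le (C := C) hsub
    rw [vanishingSubcode_sdiff_eq hR subset_union_right (hDsub.trans sdiff_subset) (by omega)]
      at key
    have hrest : ((V ∪ R) \ D) \ V = (R \ V) \ D := by
      ext j; simp only [mem_sdiff, mem_union]; tauto
    rw [hrest, card_sdiff_of_subset hDsub] at key
    have : #D ≤ s := card_le_card hDsub
    omega

/-- `ℓ` is the number of dimensions gained over the trivial bound `finrank C - #V`. -/
theorem exists_vanishingSubcode_excess [DecidableEq F] {r δ : ℕ} (hδ : 2 ≤ δ)
    (hlrc : IsLRC C r δ) (T : ℕ) (hT : T * (r + δ - 1) ≤ (δ - 1) * n) :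
    ∃ V : Finset (Fin n), ∃ ℓ, T ≤ ℓ ∧ ℓ ≤ T + δ - 2 ∧ (δ - 1) * #V ≤ ℓ * (r + δ - 1) ∧
      finrank F C + ℓ ≤ finrank F (vanishingSubcode C V) + #V := by
  induction T with
  | zero => exact ⟨∅, 0, le_rfl, Nat.zero_le _, by simp, by rw [vanishingSubcode_empty]; simp⟩
  | succ T ih =>
    obtain ⟨V, ℓ, hTℓ, hℓT, hsize, hexcess⟩ := ih (le_trans (by gcongr; omega) hT)
    by_cases hdone : T + 1 ≤ ℓ
    · exact ⟨V, ℓ, hdone, by omega, hsize, hexcess⟩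
    have hℓ : ℓ = T := by omega
    subst hℓ
    have hV : V ≠ univ := by
      rintro rfl
      rw [card_univ, Fintype.card_fin] at hsize
      have := hT.trans hsize
      rw [Nat.add_mul, one_mul] at this
      omega
    obtain ⟨V', t, ht1, htδ, hsize', hexcess'⟩ := exists_vanishingSubcode_grow hδ hlrc hV
    exact ⟨V', ℓ + t, by omega, by omega, by nlinarith, by omega⟩

theorem exists_two_le_finrank_vanishingSubcode [DecidableEq F] {r δ A x c : ℕ} (hδ : 2 ≤ δ)
    (hlrc : IsLRC C r δ) (hA : r * A < finrank F C) (hx : (δ - 1) ^ 2 ≤ r * x)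
    (hc : c + δ + x = finrank F C + A * (δ - 1)) (hcn : c ≤ n) :
    ∃ S : Finset (Fin n), #S = c ∧ 2 ≤ finrank F (vanishingSubcode C S) := by
  obtain ⟨V, ℓ, hVc, hℓ, hexcess⟩ : ∃ V : Finset (Fin n), ∃ ℓ, #V ≤ c ∧
      A * (δ - 1) ≤ ℓ + (δ - 2 + x) ∧
      finrank F C + ℓ ≤ finrank F (vanishingSubcode C V) + #V := by
    by_cases hsmall : A * (δ - 1) ≤ δ - 2 + x
    · exact ⟨∅, 0, by simp, by omega, by rw [vanishingSubcode_empty]; simp⟩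
    set y := A * (δ - 1) - x
    have hsize : y * (r + δ - 1) ≤ (δ - 1) * c := by
      have hy : y + x = A * (δ - 1) := Nat.sub_add_cancel (by omega)
      have h1 : (δ - 1) * (r * A + y) ≤ (δ - 1) * (c + (δ - 1)) :=
        Nat.mul_le_mul_left _ (by omega)
      have h2 : r * (y + x) = r * (A * (δ - 1)) := by rw [hy]
      rw [show r + δ - 1 = r + (δ - 1) by omega]
      generalize δ - 1 = e at *
      nlinarith
    obtain ⟨V, ℓ, hTℓ, hℓT, hV, hexc⟩ :=
      exists_vanishingSubcode_excess hδ hlrc (A * (δ - 1) - (δ - 2 + x))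
        (le_trans (Nat.mul_le_mul_right _ (by omega)) (hsize.trans (Nat.mul_le_mul_left _ hcn)))
    refine ⟨V, ℓ, Nat.le_of_mul_le_mul_left ?_ (by omega : 0 < δ - 1), by omega, hexc⟩
    exact hV.trans ((Nat.mul_le_mul_right _ (by omega)).trans hsize)
  obtain ⟨S, hVS, -, hS⟩ := exists_subsuperset_card_eq (subset_univ V) hVc (by simpa using hcn)
  have hdrop := finrank_vanishingSubcode_le (C := C) hVS
  rw [card_sdiff_of_subset hVS, hS] at hdrop
  exact ⟨S, hS, by omega⟩

end VanishingSubcode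

theorem IsLRC.le_mul_card_of_optimal {F : Type*} [Field F] [Fintype F] [DecidableEq F]
    {n d r δ A x : ℕ} {C : Submodule F (Fin n → F)} (hlrc : IsLRC C r δ) (hδ : 2 ≤ δ)
    (hd : MinDistGe C d) (hA : r * A < finrank F C)
    (hopt : d + finrank F C + A * (δ - 1) = n + 1) (hx : (δ - 1) ^ 2 ≤ r * x)
    (hdn : 3 * d ≤ 2 * n) :
    d ≤ (δ - 1 + x) * Fintype.card F := by
  have hq : 2 ≤ Fintype.card F := Fintype.one_lt_card
  by_cases hsmall : d ≤ 2 * (δ - 1 + x)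
  · calc d ≤ 2 * (δ - 1 + x) := hsmall
      _ ≤ (δ - 1 + x) * Fintype.card F := by rw [Nat.mul_comm]; exact Nat.mul_le_mul_left _ hq
  obtain ⟨S, hS, hdim⟩ := exists_two_le_finrank_vanishingSubcode (c := n - (d + (δ - 1 + x)))
    hδ hlrc hA hx (by omega) (by omega)
  have hplotkin := (hd.mono (vanishingSubcode_le S)).mul_pow_sub_one_le (W := Sᶜ)
    fun c hc i hi => (mem_vanishingSubcode.1 hc).2 i (by simpa using hi)
  rw [card_compl, Fintype.card_fin, hS, Nat.sub_sub_self (by omega)] at hplotkin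
  have := mul_add_one_le_of_mul_pow_sub_one_le hq hdim hplotkin
  nlinarith

/-- If `C` is an optimal `(r, δ)`-LRC over `F_q` with parameters
`[n, k, d]_q` (where `r ≥ 1`, `δ ≥ 2`) and `d/n ≤ 2/3`, then
`d ≤ ((r+δ-1)(r+1) + δ(δ-1))/r · q`. -/
theorem stmt_0 (q : ℕ) (F : Type*) [Field F] [Fintype F] [DecidableEq F]
    (hF : Fintype.card F = q)
    (n k d r δ : ℕ) (hr : 1 ≤ r) (hδ : 2 ≤ δ)
    (C : Submodule F (Fin n → F))
    (hk : Module.finrank F C = k)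
    (hd : MinDistEq C d)
    (hlrc : IsLRC C r δ)
    (hopt : SingletonOptimal n k d r δ)
    (hdn : (d : ℚ) / (n : ℚ) ≤ 2 / 3) :
    (d : ℚ) ≤ (((r : ℚ) + (δ : ℚ) - 1) * ((r : ℚ) + 1) + (δ : ℚ) * ((δ : ℚ) - 1)) / (r : ℚ)
      * (q : ℚ) := by
  obtain ⟨hge, c₀, hc₀C, hc₀, -⟩ := hd
  obtain ⟨i, -⟩ := Function.ne_iff.1 hc₀
  have hk1 : 0 < k :=
    hk ▸ Submodule.one_le_finrank_iff.2 ((Submodule.ne_bot_iff C).2 ⟨c₀, hc₀C, hc₀⟩)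
  have h3d : 3 * d ≤ 2 * n := by
    rw [div_le_div_iff₀ (by exact_mod_cast i.pos) (by norm_num)] at hdn
    exact_mod_cast (by linarith : (3 : ℚ) * d ≤ 2 * n)
  have hbound := hlrc.le_mul_card_of_optimal hδ hge (hk ▸ Nat.mul_ceilDiv_sub_one_lt hk1 hr)
    (hk ▸ hopt.add_eq hk1 hr (by omega)) ((ceilDiv_le_iff_le_mul hr).1 le_rfl) h3d
  calc (d : ℚ) ≤ ((δ - 1 + (δ - 1) ^ 2 ⌈/⌉ r : ℕ) : ℚ) * q := by exact_mod_cast hF ▸ hbound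
    _ ≤ _ := by gcongr; exact sub_one_add_ceilDiv_le hr hδ
end

section
/- Let Q be a prime power, s ≥ 2 an integer, q = Q^{s}, let b be a positive divisor of (Q^{s}−1)/(Q−1), and let c be a positive divisor of s. Set M = (Q^{s}−1)/(b(Q−1)). Then the number of pairs (α, β) ∈ F_q × F_q satisfying β^{M} = Tr_{F_q/F_{Q^c}}(α) equals gcd(b, (Q^{c}−1)/(Q−1)) · q(q−1)/(bQ^{c}) + q/Q^{c}. -/
/-!
The trace `T x = ∑_{i<m} x ^ r ^ i` (`r = Q ^ c`, `m = s / c`) is additive, so the number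
of pairs is `|ker T|` times the number of `β` with `β ^ M ∈ im T`. The image lies in the
fixed field `{x | x ^ r = x}`, which has at most `r` elements, and the kernel is the root set
of a polynomial of degree `r ^ (m - 1)`; since `|im T| · |ker T| = r ^ m`, both bounds are
attained. Finally `β ^ M` is fixed by `x ↦ x ^ r` iff `β = 0` or `β ^ (M (r - 1)) = 1`, and
in the cyclic group `Fˣ` the latter has
`gcd(q - 1, M (r - 1)) = M (Q - 1) gcd(b, (r - 1) / (Q - 1))` solutions.
-/

open Finset Polynomial

section FiberCount

variable {G H X : Type*} [AddGroup G] [AddGroup H] [Fintype G] [Fintype X] [DecidableEq H]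

theorem AddMonoidHom.card_fiber_eq_card_zero (T : G →+ H) (a : G) :
    #{x | T x = T a} = #{x | T x = 0} :=
  card_nbij' (· - a) (· + a) (by intro x; simp +contextual) (by intro x; simp +contextual)
    (by intro x; simp) (by intro x; simp)

theorem AddMonoidHom.card_fiber (T : G →+ H) (y : H) :
    #{x | T x = y} = if y ∈ univ.image T then #{x | T x = 0} else 0 := by
  split_ifs with hy
  · obtain ⟨a, -, rfl⟩ := mem_image.1 hy
    exact T.card_fiber_eq_card_zero a
  · rw [card_eq_zero, filter_eq_empty_iff]
    exact fun x _ hx => hy (mem_image.2 ⟨x, mem_univ x, hx⟩)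

theorem AddMonoidHom.card_image_mul_card_zero (T : G →+ H) :
    #(univ.image T) * #{x | T x = 0} = Fintype.card G := by
  rw [← card_univ, card_eq_sum_card_image T univ, sum_const_nat]
  intro y hy
  rw [T.card_fiber, if_pos hy]

theorem AddMonoidHom.card_filter_prod_eq_card_zero_mul (T : G →+ H) (g : X → H) :
    #{p : G × X | g p.2 = T p.1} = #{x | T x = 0} * #{x | g x ∈ univ.image T} := by
  calc #{p : G × X | g p.2 = T p.1} = ∑ x, #{a | T a = g x} := by
        rw [card_filter, ← univ_product_univ, sum_product_right]
        refine sum_congr rfl fun x _ => ?_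
        rw [card_filter]
        exact sum_congr rfl fun a _ => if_congr eq_comm rfl rfl
    _ = #{x | T x = 0} * #{x | g x ∈ univ.image T} := by
        rw [sum_congr rfl fun x _ => T.card_fiber (g x), ← sum_filter, sum_const, smul_eq_mul,
          mul_comm]

end FiberCount

theorem Polynomial.card_filter_eval_eq_zero_le {R : Type*} [CommRing R] [IsDomain R] [Fintype R]
    [DecidableEq R] {P : R[X]} (hP : P ≠ 0) : #{x | P.eval x = 0} ≤ P.natDegree :=
  card_le_degree_of_subset_roots fun _ hx => (mem_roots hP).2 (mem_filter.1 hx).2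

theorem FiniteField.card_filter_pow_eq_self_le {F : Type*} [Field F] [Fintype F] [DecidableEq F]
    {r : ℕ} (hr : 1 < r) : #{x : F | x ^ r = x} ≤ r := by
  calc #{x : F | x ^ r = x} = #{x : F | (X ^ r - X : F[X]).eval x = 0} := by
        simp only [eval_sub, eval_pow, eval_X, sub_eq_zero]
    _ ≤ r := (card_filter_eval_eq_zero_le (X_pow_card_sub_X_ne_zero F hr)).trans
        (X_pow_card_sub_X_natDegree_eq F hr).le

theorem FiniteField.card_pow_pow_eq_pow {F : Type*} [Field F] [Fintype F] [DecidableEq F]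
    (M : ℕ) {r : ℕ} (hr : 0 < r) :
    #{β : F | (β ^ M) ^ r = β ^ M} = 1 + (Fintype.card F - 1).gcd (M * (r - 1)) := by
  set K := (powMonoidHom (M * (r - 1)) : Fˣ →* Fˣ).ker
  have hunit (u : Fˣ) : ((u : F) ^ M) ^ r = (u : F) ^ M ↔ u ∈ K := by
    rw [MonoidHom.mem_ker, powMonoidHom_apply, ← Units.val_pow_eq_pow_val,
      ← Units.val_pow_eq_pow_val, Units.val_inj, ← pow_mul,
      show M * r = M + M * (r - 1) by cases r <;> simp_all [Nat.mul_succ, add_comm], pow_add,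
      mul_eq_left]
  have hsplit : ({β : F | (β ^ M) ^ r = β ^ M} : Finset F) =
      insert 0 ((univ.filter (· ∈ K)).map ⟨Units.val, Units.val_injective⟩) := by
    ext β
    rcases eq_or_ne β 0 with rfl | hβ
    · rcases eq_or_ne M 0 with rfl | hM <;> simp [*, hr.ne']
    · obtain ⟨u, rfl⟩ := isUnit_iff_ne_zero.2 hβ
      simp [hβ, hunit]
  rw [hsplit, card_insert_of_notMem (by simp), card_map, add_comm, ← Fintype.card_subtype,
    ← Nat.card_eq_fintype_card, IsCyclic.card_powMonoidHom_ker, Nat.card_units,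
    Nat.card_eq_fintype_card]

section FrobeniusTrace

variable (F : Type*) [Field F] (p k m : ℕ) [ExpChar F p]

/-- When `|F| = (p ^ k) ^ m`, this is the trace of `F` over its subfield with `p ^ k` elements. -/
def frobeniusTrace : F →+ F :=
  ∑ i ∈ range m, (iterateFrobenius F p (k * i)).toAddMonoidHom

variable {F p k m}

theorem frobeniusTrace_apply (x : F) :
    frobeniusTrace F p k m x = ∑ i ∈ range m, x ^ (p ^ k) ^ i := by
  simp [frobeniusTrace, iterateFrobenius_def, pow_mul]

variable [Fintype F]

theorem frobeniusTrace_pow_eq_self (hF : Fintype.card F = (p ^ k) ^ m) (x : F) :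
    frobeniusTrace F p k m x ^ p ^ k = frobeniusTrace F p k m x := by
  rw [← sub_eq_zero, frobeniusTrace_apply, ← iterateFrobenius_def, map_sum, ← sum_sub_distrib]
  simp only [iterateFrobenius_def, ← pow_mul x, ← pow_succ (p ^ k)]
  rw [sum_range_sub (fun i => x ^ (p ^ k) ^ i), ← hF, FiniteField.pow_card, pow_zero, pow_one,
    sub_self]

variable [DecidableEq F]

theorem image_frobeniusTrace_subset (hF : Fintype.card F = (p ^ k) ^ m) :
    univ.image (frobeniusTrace F p k m) ⊆ ({x | x ^ p ^ k = x} : Finset F) := by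
  intro y hy
  obtain ⟨x, -, rfl⟩ := mem_image.1 hy
  exact mem_filter.2 ⟨mem_univ _, frobeniusTrace_pow_eq_self hF x⟩

theorem card_frobeniusTrace_eq_zero_le (hr : 1 < p ^ k) (hm : 0 < m) :
    #{x | frobeniusTrace F p k m x = 0} ≤ (p ^ k) ^ (m - 1) := by
  set P : F[X] := ∑ i ∈ range m, X ^ (p ^ k) ^ i
  have hP : P.coeff ((p ^ k) ^ (m - 1)) = 1 := by
    rw [finsetSum_coeff, sum_eq_single (m - 1)]
    · simp
    · intro i _ hi
      rw [coeff_X_pow, if_neg fun h => hi (Nat.pow_right_injective hr h.symm)]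
    · simp [hm]
  calc #{x | frobeniusTrace F p k m x = 0} = #{x | P.eval x = 0} := by
        simp [P, eval_finsetSum, frobeniusTrace_apply]
    _ ≤ P.natDegree := card_filter_eval_eq_zero_le fun h => by simp [h] at hP
    _ ≤ (p ^ k) ^ (m - 1) := natDegree_sum_le_of_forall_le _ _ fun i hi => by
        rw [natDegree_X_pow]
        exact Nat.pow_le_pow_right hr.le (by simp at hi; omega)

theorem card_image_and_card_zero_frobeniusTrace (hr : 1 < p ^ k) (hm : 0 < m)
    (hF : Fintype.card F = (p ^ k) ^ m) :
    #(univ.image (frobeniusTrace F p k m)) = p ^ k ∧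
      #{x | frobeniusTrace F p k m x = 0} = (p ^ k) ^ (m - 1) := by
  refine (mul_eq_mul_iff_eq_and_eq_of_pos ?_ (card_frobeniusTrace_eq_zero_le hr hm) ?_ ?_).1 ?_
  · exact (card_le_card (image_frobeniusTrace_subset hF)).trans
      (FiniteField.card_filter_pow_eq_self_le hr)
  · simp
  · positivity
  · rw [AddMonoidHom.card_image_mul_card_zero, hF, ← pow_succ', Nat.sub_add_cancel hm]

theorem image_frobeniusTrace (hr : 1 < p ^ k) (hm : 0 < m) (hF : Fintype.card F = (p ^ k) ^ m) :
    univ.image (frobeniusTrace F p k m) = ({x | x ^ p ^ k = x} : Finset F) :=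
  eq_of_subset_of_card_le (image_frobeniusTrace_subset hF) <| by
    rw [(card_image_and_card_zero_frobeniusTrace hr hm hF).1]
    exact FiniteField.card_filter_pow_eq_self_le hr

theorem card_filter_pow_eq_frobeniusTrace (hr : 1 < p ^ k) (hm : 0 < m)
    (hF : Fintype.card F = (p ^ k) ^ m) (M : ℕ) :
    #{x : F × F | x.2 ^ M = frobeniusTrace F p k m x.1} =
      (p ^ k) ^ (m - 1) * (1 + (Fintype.card F - 1).gcd (M * (p ^ k - 1))) := by
  rw [AddMonoidHom.card_filter_prod_eq_card_zero_mul (frobeniusTrace F p k m) (· ^ M),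
    image_frobeniusTrace hr hm hF,
    (card_image_and_card_zero_frobeniusTrace hr hm hF).2]
  simp only [mem_filter, mem_univ, true_and]
  rw [FiniteField.card_pow_pow_eq_pow M (by omega)]

end FrobeniusTrace

theorem Nat.pow_sub_one_eq_div_mul {Q s b : ℕ} (hbdvd : b ∣ (Q ^ s - 1) / (Q - 1)) :
    Q ^ s - 1 = (Q ^ s - 1) / (b * (Q - 1)) * (Q - 1) * b := by
  have hdvd : Q - 1 ∣ Q ^ s - 1 := by simpa using Nat.sub_dvd_pow_sub_pow Q 1 s
  rw [mul_assoc, mul_comm _ b, Nat.div_mul_cancel]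
  simpa [Nat.mul_div_cancel' hdvd, mul_comm] using mul_dvd_mul_left (Q - 1) hbdvd

theorem Nat.gcd_pow_sub_one_div_mul {Q s b : ℕ} (hbdvd : b ∣ (Q ^ s - 1) / (Q - 1)) (c : ℕ) :
    (Q ^ s - 1).gcd ((Q ^ s - 1) / (b * (Q - 1)) * (Q ^ c - 1)) =
      (Q ^ s - 1) / (b * (Q - 1)) * (Q - 1) * b.gcd ((Q ^ c - 1) / (Q - 1)) := by
  have hdvd : Q - 1 ∣ Q ^ c - 1 := by simpa using Nat.sub_dvd_pow_sub_pow Q 1 c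
  set M := (Q ^ s - 1) / (b * (Q - 1))
  have hM : Q ^ s - 1 = M * (Q - 1) * b := Nat.pow_sub_one_eq_div_mul hbdvd
  conv_lhs => rw [hM, ← Nat.mul_div_cancel' hdvd, ← mul_assoc, Nat.gcd_mul_left]

/-- Let `q = Q^s` (`Q` a prime power, `s ≥ 2`), `b` a positive
divisor of `(Q^s-1)/(Q-1)`, `c` a positive divisor of `s`, and
`M = (Q^s-1)/(b(Q-1))`. The number of pairs `(α, β) ∈ F_q × F_q` with
`β^M = Tr_{F_q/F_{Q^c}}(α) = ∑_{i=0}^{s/c-1} α^(Q^(ci))` equals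
`gcd(b, (Q^c-1)/(Q-1)) · q(q-1)/(bQ^c) + q/Q^c`. -/
theorem stmt_15 (Q : ℕ) (hQ : IsPrimePow Q) (s : ℕ) (hs : 2 ≤ s)
    (b : ℕ) (hb : 0 < b) (hbdvd : b ∣ (Q ^ s - 1) / (Q - 1))
    (c : ℕ) (hc : 0 < c) (hcdvd : c ∣ s)
    (q : ℕ) (hq : q = Q ^ s)
    (F : Type*) [Field F] [Fintype F] (hF : Fintype.card F = q) :
    (Set.ncard {p : F × F |
        p.2 ^ ((Q ^ s - 1) / (b * (Q - 1))) =
          ∑ i ∈ Finset.range (s / c), p.1 ^ (Q ^ (c * i))} : ℚ) =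
      (Nat.gcd b ((Q ^ c - 1) / (Q - 1)) : ℚ) * ((q : ℚ) * ((q : ℚ) - 1))
          / ((b : ℚ) * (Q : ℚ) ^ c)
        + (q : ℚ) / (Q : ℚ) ^ c := by
  classical
  obtain ⟨p, k, hp, hk, hQ⟩ := hQ
  have := Fact.mk hp.nat_prime
  have hm : 0 < s / c := Nat.div_pos (Nat.le_of_dvd (by omega) hcdvd) hc
  have hQc : p ^ (k * c) = Q ^ c := by rw [pow_mul, hQ]
  have hcard : Fintype.card F = (p ^ (k * c)) ^ (s / c) := by
    rw [hF, hq, hQc, ← pow_mul, Nat.mul_div_cancel' hcdvd]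
  have : CharP F p := charP_of_card_eq_prime_pow (hcard.trans (pow_mul ..).symm)
  have hr : 1 < p ^ (k * c) := Nat.one_lt_pow (by positivity) hp.nat_prime.one_lt
  set M := (Q ^ s - 1) / (b * (Q - 1))
  have hcount : {x : F × F | x.2 ^ M = ∑ i ∈ range (s / c), x.1 ^ Q ^ (c * i)}.ncard =
      (Q ^ c) ^ (s / c - 1) * (1 + M * (Q - 1) * b.gcd ((Q ^ c - 1) / (Q - 1))) := by
    have hT (x : F) :
        ∑ i ∈ range (s / c), x ^ Q ^ (c * i) = frobeniusTrace F p (k * c) (s / c) x := by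
      simp only [frobeniusTrace_apply, hQc, pow_mul]
    simp only [hT, Set.ncard_eq_toFinset_card', Set.toFinset_ofPred]
    rw [card_filter_pow_eq_frobeniusTrace hr hm hcard, hQc, hF, hq,
      Nat.gcd_pow_sub_one_div_mul hbdvd]
  have hQ1 : 1 ≤ Q := hQ ▸ Nat.one_le_pow _ _ hp.nat_prime.pos
  have hqM : (q : ℚ) - 1 = M * (Q - 1) * b := by
    have hcast := congrArg (Nat.cast (R := ℚ)) (Nat.pow_sub_one_eq_div_mul hbdvd)
    push_cast [Nat.one_le_pow _ _ (by omega : 0 < Q), hQ1] at hcast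
    rw [hq, Nat.cast_pow, hcast]
  have hqr : (q : ℚ) = Q ^ c * (Q ^ c) ^ (s / c - 1) := by
    rw [← pow_succ', Nat.sub_add_cancel hm, ← pow_mul, Nat.mul_div_cancel' hcdvd, hq,
      Nat.cast_pow]
  rw [hcount, hqM]
  push_cast [hQ1]
  rw [hqr]
  field_simp
  ring
end

section
/- Let Q be a prime power, s ≥ 2 an integer, let b be a positive divisor of (Q^{s}−1)/(Q−1), and let c be a positive divisor of s. Then the number of elements β ∈ F_{Q^{s}} satisfying β^{(Q^{s}−1)/(b(Q−1))} ∈ F_{Q^{c}} equals gcd(b, (Q^{c}−1)/(Q−1)) · (Q^{s}−1)/b + 1. -/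
/-!
Write `e = (Q^s - 1)/(b(Q - 1))`. A nonzero `β` satisfies `(β^e)^(Q^c) = β^e` iff
`β^(e(Q^c - 1)) = 1`, which in the cyclic group `Fˣ` of order `Q^s - 1 = b(Q - 1)e` has
`gcd(Q^s - 1, e(Q^c - 1)) = e(Q - 1) · gcd(b, (Q^c - 1)/(Q - 1))` solutions;
`β = 0` adds one more.
-/

theorem pow_eq_self_iff_eq_zero_or_pow_pred_eq_one {M₀ : Type*} [MonoidWithZero M₀]
    [IsCancelMulZero M₀] {x : M₀} {n : ℕ} (hn : n ≠ 0) :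
    x ^ n = x ↔ x = 0 ∨ x ^ (n - 1) = 1 := by
  obtain ⟨k, rfl⟩ := Nat.exists_eq_add_one_of_ne_zero hn
  rcases eq_or_ne x 0 with rfl | hx
  · simp
  · rw [pow_succ, Nat.add_sub_cancel, mul_eq_right₀ hx]
    simp [hx]

theorem IsCyclic.ncard_setOf_pow_eq_one {G : Type*} [CommGroup G] [IsCyclic G] [Finite G]
    (m : ℕ) : {g : G | g ^ m = 1}.ncard = (Nat.card G).gcd m :=
  (Nat.card_coe_set_eq _).symm.trans (IsCyclic.card_powMonoidHom_ker G m)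

namespace FiniteField

variable {F : Type*} [Field F] [Fintype F]

theorem ncard_setOf_pow_pow_eq_pow (e : ℕ) {n : ℕ} (hn : n ≠ 0) :
    {β : F | (β ^ e) ^ n = β ^ e}.ncard = (Fintype.card F - 1).gcd (e * (n - 1)) + 1 := by
  classical
  have hset : {β : F | (β ^ e) ^ n = β ^ e} =
      insert 0 (Units.val '' {u : Fˣ | u ^ (e * (n - 1)) = 1}) := by
    ext β
    rcases eq_or_ne β 0 with rfl | hβ
    · simp [zero_pow_eq, hn]
    · lift β to Fˣ using hβ.isUnit
      simp only [Set.mem_ofPred_eq, Set.mem_insert_iff, Set.mem_image, Units.val_inj,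
        exists_eq_right, Units.ne_zero, false_or]
      rw [pow_eq_self_iff_eq_zero_or_pow_pred_eq_one hn, ← pow_mul]
      simp [← Units.val_pow_eq_pow_val]
  rw [hset, Set.ncard_insert_of_notMem (by simp),
    Set.ncard_image_of_injective _ Units.val_injective, IsCyclic.ncard_setOf_pow_eq_one,
    Nat.card_eq_fintype_card, Fintype.card_units]

end FiniteField

theorem stmt_16_general (Q : ℕ) (s : ℕ)
    (b : ℕ) (hbdvd : b ∣ (Q ^ s - 1) / (Q - 1))
    (c : ℕ)
    (F : Type*) [Field F] [Fintype F] (hF : Fintype.card F = Q ^ s) :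
    (Set.ncard {β : F |
        (β ^ ((Q ^ s - 1) / (b * (Q - 1)))) ^ (Q ^ c) =
          β ^ ((Q ^ s - 1) / (b * (Q - 1)))} : ℚ) =
      (Nat.gcd b ((Q ^ c - 1) / (Q - 1)) : ℚ) * (((Q : ℚ) ^ s - 1) / (b : ℚ)) + 1 := by
  have hQs : 1 < Q ^ s := hF ▸ Fintype.one_lt_card
  have hQ : 1 < Q := lt_of_pow_lt_pow_left₀ s (Nat.zero_le Q) (by rwa [one_pow])
  obtain ⟨e, he⟩ := Nat.mul_dvd_of_dvd_div (Nat.sub_one_dvd_pow_sub_one Q s) hbdvd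
  obtain ⟨t, ht⟩ := Nat.sub_one_dvd_pow_sub_one Q c
  have hb : b ≠ 0 := by rintro rfl; omega
  have he_def : (Q ^ s - 1) / (b * (Q - 1)) = e := by
    rw [he, mul_comm b,
      Nat.mul_div_cancel_left _ (Nat.pos_of_ne_zero (mul_ne_zero (by omega) hb))]
  have ht_def : (Q ^ c - 1) / (Q - 1) = t := by
    rw [ht, Nat.mul_div_cancel_left _ (by omega)]
  have hgcd : (Q ^ s - 1).gcd (e * (Q ^ c - 1)) = (Q - 1) * e * b.gcd t := by
    rw [he, ht, ← Nat.gcd_mul_left]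
    ring_nf
  have hQs_rat : (Q : ℚ) ^ s - 1 = (Q - 1) * b * e := by
    simpa [Nat.cast_sub hQs.le, Nat.cast_sub hQ.le] using congrArg (Nat.cast : ℕ → ℚ) he
  rw [he_def, FiniteField.ncard_setOf_pow_pow_eq_pow e (pow_ne_zero _ (by omega)), hF, hgcd, ht_def,
    hQs_rat]
  push_cast [Nat.cast_sub hQ.le]
  field_simp

/-- Let `Q` be a prime power, `s ≥ 2`, `b` a positive divisor of
`(Q^s-1)/(Q-1)`, and `c` a positive divisor of `s`. The number of `β ∈ F_{Q^s}`
with `β^((Q^s-1)/(b(Q-1))) ∈ F_{Q^c}` (membership in the subfield `F_{Q^c}` of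
`F_{Q^s}` being characterized by `x^(Q^c) = x`) equals
`gcd(b, (Q^c-1)/(Q-1)) · (Q^s-1)/b + 1`. -/
theorem stmt_16 (Q : ℕ) (hQ : IsPrimePow Q) (s : ℕ) (hs : 2 ≤ s)
    (b : ℕ) (hb : 0 < b) (hbdvd : b ∣ (Q ^ s - 1) / (Q - 1))
    (c : ℕ) (hc : 0 < c) (hcdvd : c ∣ s)
    (F : Type*) [Field F] [Fintype F] (hF : Fintype.card F = Q ^ s) :
    (Set.ncard {β : F |
        (β ^ ((Q ^ s - 1) / (b * (Q - 1)))) ^ (Q ^ c) =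
          β ^ ((Q ^ s - 1) / (b * (Q - 1)))} : ℚ) =
      (Nat.gcd b ((Q ^ c - 1) / (Q - 1)) : ℚ) * (((Q : ℚ) ^ s - 1) / (b : ℚ)) + 1 :=
  stmt_16_general Q s b hbdvd c F hF
end

section
/- Let s be an even positive integer, q = 2^{2s}, and let η ∈ F_q be an element not of the form α² + α for any α ∈ F_q. Then the number of pairs (x, y) ∈ F_q × F_q satisfying y³ = x² + x + η equals q + 2^{s+1}; that is, the curve y³ = x² + x + η is a maximal curve of genus 1 over F_q, attaining the Hasse–Weil upper bound q + 1 + 2√q (the curve has exactly one rational point at infinity). -/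
/-!
In characteristic 2 let `ψ : F → {±1}` be the additive character whose kernel is the
index-two subgroup `{α² + α}`. Then `x² + x = v` has `1 + ψ v` solutions, so the curve has
`q + ∑ ψ(y³ + η) = q - T` affine points, where `T = ∑ ψ(y³)`. Writing `z = y + d` and
`y = d u`, `T² = ∑_d ψ(d³) ∑_u ψ(d³ (u² + u))`; since `ψ(b² u²) = ψ(b u)` the inner sum is a
linear character sum and vanishes unless `d³ ∈ {0, 1}`, so `T² = 4q` (`3 ∣ q - 1` gives three
cube roots of unity). As `y ↦ y³` is three-to-one on `Fˣ`, `T ≡ ψ 0 = 1 (mod 3)`, while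
`2^(s+1) ≡ 2 (mod 3)` for even `s`; hence `T = -2^(s+1)`.
-/

open Finset

namespace AddSubgroup

variable {G : Type*} [AddGroup G]

open scoped Classical in
noncomputable def signChar (H : AddSubgroup G) (hH : H.index = 2) : AddChar G ℤ where
  toFun x := if x ∈ H then 1 else -1
  map_zero_eq_one' := if_pos H.zero_mem
  map_add_eq_mul' a b := by
    simp only [H.add_mem_iff_of_index_two hH]
    split_ifs <;> simp_all

lemma signChar_of_mem {H : AddSubgroup G} (hH : H.index = 2) {x : G} (hx : x ∈ H) :
    H.signChar hH x = 1 := by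
  simp [signChar, hx]

lemma signChar_of_notMem {H : AddSubgroup G} (hH : H.index = 2) {x : G} (hx : x ∉ H) :
    H.signChar hH x = -1 := by
  simp [signChar, hx]

lemma signChar_ne_one {H : AddSubgroup G} (hH : H.index = 2) : H.signChar hH ≠ 1 := by
  obtain ⟨x, hx⟩ : ∃ x, x ∉ H := by
    by_contra! h
    simp [H.eq_top_iff'.mpr h] at hH
  exact AddChar.ne_one_iff.mpr ⟨x, by simp [signChar_of_notMem hH hx]⟩

end AddSubgroup

namespace IsPrimitiveRoot

variable {R : Type*} [CommRing R] [IsDomain R] [Fintype R] [DecidableEq R] {ζ : R} {n : ℕ}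
  [NeZero n]

lemma _root_.Polynomial.filter_pow_eq_eq_nthRootsFinset (a : R) :
    ({y | y ^ n = a} : Finset R) = Polynomial.nthRootsFinset n a := by
  ext y
  simp [Polynomial.mem_nthRootsFinset (Nat.pos_of_neZero n)]

lemma card_filter_pow_eq_one (hζ : IsPrimitiveRoot ζ n) : #{y : R | y ^ n = 1} = n := by
  rw [Polynomial.filter_pow_eq_eq_nthRootsFinset, hζ.card_nthRootsFinset]

lemma dvd_card_filter_pow_eq (hζ : IsPrimitiveRoot ζ n) {a : R} (ha : a ≠ 0) :
    n ∣ #{y | y ^ n = a} := by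
  rw [Polynomial.filter_pow_eq_eq_nthRootsFinset, Polynomial.nthRootsFinset_def,
    Multiset.toFinset_card_of_nodup (hζ.nthRoots_nodup ha), hζ.card_nthRoots]
  split_ifs <;> simp

lemma sum_comp_pow_modEq (hζ : IsPrimitiveRoot ζ n) (f : R → ℤ) :
    ∑ y, f (y ^ n) ≡ f 0 [ZMOD n] := by
  rw [← ZMod.intCast_eq_intCast_iff, Finset.sum_comp]
  simp only [Int.cast_sum, nsmul_eq_mul, Int.cast_mul, Int.cast_natCast]
  rw [Finset.sum_eq_single_of_mem (0 : R) (by simp [NeZero.ne n])]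
  · have hzero : ({y | y ^ n = 0} : Finset R) = {0} := by
      ext y
      simp [NeZero.ne n]
    rw [hzero, card_singleton, Nat.cast_one, one_mul]
  · intro a _ ha
    rw [(ZMod.natCast_eq_zero_iff _ n).mpr (hζ.dvd_card_filter_pow_eq ha), zero_mul]

end IsPrimitiveRoot

lemma FiniteField.exists_isPrimitiveRoot_of_dvd_card_sub_one {F : Type*} [Field F] [Fintype F]
    {p : ℕ} [Fact p.Prime] (hp : p ∣ Fintype.card F - 1) : ∃ ζ : F, IsPrimitiveRoot ζ p := by
  classical
  obtain ⟨u, hu⟩ := exists_prime_orderOf_dvd_card (G := Fˣ) p (by rwa [Fintype.card_units])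
  exact ⟨u, IsPrimitiveRoot.coe_units_iff.mpr (IsPrimitiveRoot.iff_orderOf.mpr hu)⟩

lemma FiniteField.charP_two_of_card_eq_two_pow {F : Type*} [Field F] [Fintype F] {k : ℕ}
    (hF : Fintype.card F = 2 ^ k) : CharP F 2 := by
  obtain ⟨p, _, n, hp, hcard⟩ := FiniteField.card' F
  have hdvd : p ∣ 2 ^ k := hF ▸ hcard ▸ dvd_pow_self p n.ne_zero
  obtain rfl := (Nat.prime_dvd_prime_iff_eq hp Nat.prime_two).mp (hp.dvd_of_dvd_pow hdvd)
  assumption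

lemma Int.eq_neg_two_pow_of_sq_eq_of_modEq {T : ℤ} {s : ℕ} (hs : Even s)
    (hsq : T ^ 2 = (2 ^ (s + 1)) ^ 2) (hT : T ≡ 1 [ZMOD 3]) : T = -2 ^ (s + 1) := by
  obtain ⟨t, rfl⟩ := hs
  have h2 : (2 : ℤ) ^ (t + t + 1) ≡ 2 [ZMOD 3] := by
    rw [← two_mul, pow_succ, pow_mul]
    simpa using ((show (2 : ℤ) ^ 2 ≡ 1 [ZMOD 3] by decide).pow t).mul_right 2
  rcases sq_eq_sq_iff_eq_or_eq_neg.mp hsq with h | h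
  · exact absurd (hT.symm.trans (h ▸ h2)) (by decide)
  · exact h

section ArtinSchreier

variable (F : Type*) [Field F] [CharP F 2]

def artinSchreier : F →+ F := (frobenius F 2).toAddMonoidHom + AddMonoidHom.id F

variable {F}

@[simp]
lemma artinSchreier_apply (x : F) : artinSchreier F x = x ^ 2 + x := rfl

lemma mem_ker_artinSchreier {x : F} : x ∈ (artinSchreier F).ker ↔ x = 0 ∨ x = 1 := by
  rw [AddMonoidHom.mem_ker, artinSchreier_apply, sq, ← mul_add_one, mul_eq_zero,
    CharTwo.add_eq_zero]

lemma card_ker_artinSchreier : Nat.card (artinSchreier F).ker = 2 := by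
  have hker : ((artinSchreier F).ker : Set F) = {0, 1} := by
    ext x
    exact mem_ker_artinSchreier
  rw [← SetLike.coe_sort_coe, Nat.card_coe_set_eq, hker, Set.ncard_pair zero_ne_one]

variable [Finite F]

lemma index_range_artinSchreier : (artinSchreier F).range.index = 2 := by
  rw [AddSubgroup.index_range, card_ker_artinSchreier]

variable (F) in
noncomputable def artinSchreierChar : AddChar F ℤ :=
  (artinSchreier F).range.signChar index_range_artinSchreier

lemma artinSchreierChar_sq_add_self (x : F) : artinSchreierChar F (x ^ 2 + x) = 1 :=
  AddSubgroup.signChar_of_mem _ ⟨x, rfl⟩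

lemma artinSchreierChar_eq_neg_one {v : F} (hv : ∀ α : F, v ≠ α ^ 2 + α) :
    artinSchreierChar F v = -1 :=
  AddSubgroup.signChar_of_notMem _ fun ⟨α, hα⟩ ↦ hv α hα.symm

lemma artinSchreierChar_sq (x : F) : artinSchreierChar F (x ^ 2) = artinSchreierChar F x := by
  rw [← CharTwo.add_cancel_right (x ^ 2) x, AddChar.map_add_eq_mul,
    artinSchreierChar_sq_add_self, one_mul]

lemma artinSchreierChar_isPrimitive : (artinSchreierChar F).IsPrimitive :=
  AddChar.IsPrimitive.of_ne_one (AddSubgroup.signChar_ne_one _)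

lemma artinSchreierChar_one {ω : F} (hω : IsPrimitiveRoot ω 3) : artinSchreierChar F 1 = 1 := by
  have h := hω.geom_sum_eq_zero (by norm_num)
  simp only [sum_range_succ, sum_range_zero, pow_zero, pow_one, zero_add] at h
  rw [← CharTwo.add_eq_zero.mp (by linear_combination h : ω ^ 2 + ω + 1 = 0),
    artinSchreierChar_sq_add_self]

end ArtinSchreier

section CharacterSums

variable {F : Type*} [Field F] [CharP F 2] [Fintype F] [DecidableEq F]

lemma card_sq_add_self_eq (v : F) :
    (#{x | x ^ 2 + x = v} : ℤ) = 1 + artinSchreierChar F v := by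
  by_cases hv : v ∈ (artinSchreier F).range
  · have hfib : #{x | x ^ 2 + x = v} = #{x | x ^ 2 + x = (0 : F)} :=
      AddMonoidHom.card_fiber_eq_of_mem_range (artinSchreier F) hv ⟨0, map_zero _⟩
    have hzero : ({x | x ^ 2 + x = 0} : Finset F) = {0, 1} := by
      ext x
      simpa using mem_ker_artinSchreier (x := x)
    rw [artinSchreierChar, AddSubgroup.signChar_of_mem _ hv, hfib, hzero, card_pair zero_ne_one]
    norm_num
  · rw [artinSchreierChar, AddSubgroup.signChar_of_notMem _ hv, filter_false_of_mem]
    · simp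
    · exact fun x _ hx ↦ hv ⟨x, hx⟩

lemma sum_artinSchreierChar_mul_sq_add_self (c : F) :
    ∑ u : F, artinSchreierChar F (c * (u ^ 2 + u)) =
      if c = 0 ∨ c = 1 then (Fintype.card F : ℤ) else 0 := by
  set ψ := artinSchreierChar F
  obtain ⟨b, hb⟩ := isSquare_of_charTwo' c
  -- `c u² = (b u)²` and `ψ` is invariant under squaring, so the quadratic phase is linear
  have hlin (u : F) : ψ (c * (u ^ 2 + u)) = ψ (u * (b + c)) := by
    calc ψ (c * (u ^ 2 + u)) = ψ ((b * u) ^ 2) * ψ (c * u) := by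
          rw [← AddChar.map_add_eq_mul, hb]; congr 1; ring
      _ = ψ (u * (b + c)) := by
          rw [artinSchreierChar_sq, ← AddChar.map_add_eq_mul]; congr 1; ring
  have hbc : b + c = 0 ↔ c = 0 ∨ c = 1 := by
    rw [CharTwo.add_eq_zero, ← IsIdempotentElem.iff_eq_zero_or_one, IsIdempotentElem,
      ← (frobenius_inj F 2).eq_iff, frobenius_def, frobenius_def, sq, sq, ← hb, eq_comm]
  rw [sum_congr rfl fun u _ ↦ hlin u, AddChar.sum_mulShift _ artinSchreierChar_isPrimitive]
  simp only [hbc, Nat.cast_ite, Nat.cast_zero]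

lemma sum_artinSchreierChar_cube_add_cube {ω : F} (hω : IsPrimitiveRoot ω 3) (d : F) :
    ∑ y : F, artinSchreierChar F (y ^ 3 + (y + d) ^ 3) =
      if d = 0 ∨ d ^ 3 = 1 then (Fintype.card F : ℤ) else 0 := by
  rcases eq_or_ne d 0 with rfl | hd
  · simp [CharTwo.add_self_eq_zero]
  have hsub (u : F) : (d * u) ^ 3 + (d * u + d) ^ 3 = d ^ 3 * (u ^ 2 + u) + d ^ 3 := by
    linear_combination (d ^ 3 * (u ^ 3 + u ^ 2 + u)) * CharTwo.two_eq_zero (R := F)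
  rw [← Equiv.sum_comp (Equiv.mulLeft₀ d hd)]
  simp only [Equiv.mulLeft₀_apply, hsub, AddChar.map_add_eq_mul, ← sum_mul,
    sum_artinSchreierChar_mul_sq_add_self]
  by_cases h1 : d ^ 3 = 1 <;> simp [h1, hd, artinSchreierChar_one hω]

lemma sq_sum_artinSchreierChar_cube {ω : F} (hω : IsPrimitiveRoot ω 3) :
    (∑ y : F, artinSchreierChar F (y ^ 3)) ^ 2 = 4 * Fintype.card F := by
  set ψ := artinSchreierChar F
  have hcount : #{d : F | d = 0 ∨ d ^ 3 = 1} = 4 := by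
    rw [filter_or, card_union_of_disjoint, filter_eq', if_pos (mem_univ _), card_singleton,
      hω.card_filter_pow_eq_one]
    exact disjoint_filter.mpr fun d _ h0 ↦ by simp [h0]
  calc (∑ y, ψ (y ^ 3)) ^ 2 = ∑ y, ∑ z, ψ (y ^ 3 + z ^ 3) := by
        simp_rw [sq, sum_mul_sum, AddChar.map_add_eq_mul]
    _ = ∑ y, ∑ d, ψ (y ^ 3 + (y + d) ^ 3) :=
        sum_congr rfl fun y _ ↦ (Equiv.sum_comp (Equiv.addLeft y) _).symm
    _ = ∑ d, ∑ y, ψ (y ^ 3 + (y + d) ^ 3) := sum_comm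
    _ = ∑ d : F, if d = 0 ∨ d ^ 3 = 1 then (Fintype.card F : ℤ) else 0 :=
        sum_congr rfl fun d _ ↦ sum_artinSchreierChar_cube_add_cube hω d
    _ = 4 * Fintype.card F := by
        rw [sum_ite, sum_const_zero, add_zero, sum_const, hcount, nsmul_eq_mul]
        norm_num

lemma sum_artinSchreierChar_cube_eq {s : ℕ} (hs : Even s) (hF : Fintype.card F = 2 ^ (2 * s)) :
    ∑ y : F, artinSchreierChar F (y ^ 3) = -2 ^ (s + 1) := by
  obtain ⟨ω, hω⟩ : ∃ ω : F, IsPrimitiveRoot ω 3 := by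
    have : Fact (Nat.Prime 3) := ⟨Nat.prime_three⟩
    refine FiniteField.exists_isPrimitiveRoot_of_dvd_card_sub_one ?_
    have h := Nat.sub_dvd_pow_sub_pow 4 1 s
    rw [hF, pow_mul]
    norm_num at h ⊢
    exact h
  apply Int.eq_neg_two_pow_of_sq_eq_of_modEq hs
  · rw [sq_sum_artinSchreierChar_cube hω, hF]
    push_cast
    ring
  · simpa using hω.sum_comp_pow_modEq (artinSchreierChar F)

lemma ncard_sq_add_self_eq (g : F → F) :
    ({p : F × F | p.1 ^ 2 + p.1 = g p.2}.ncard : ℤ) =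
      Fintype.card F + ∑ y, artinSchreierChar F (g y) := by
  rw [Set.ncard_eq_toFinset_card', Set.toFinset_ofPred, card_filter, Fintype.sum_prod_type_right]
  simp_rw [← card_filter]
  push_cast
  simp_rw [card_sq_add_self_eq, sum_add_distrib]
  simp

end CharacterSums

theorem stmt_19_general (s : ℕ) (hse : Even s)
    (q : ℕ) (hq : q = 2 ^ (2 * s))
    (F : Type*) [Field F] [Fintype F] (hF : Fintype.card F = q)
    (η : F) (hη : ∀ α : F, η ≠ α ^ 2 + α) :
    Set.ncard {p : F × F | p.2 ^ 3 = p.1 ^ 2 + p.1 + η} = q + 2 ^ (s + 1) := by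
  classical
  subst hq
  have := FiniteField.charP_two_of_card_eq_two_pow hF
  have hcurve :
      {p : F × F | p.2 ^ 3 = p.1 ^ 2 + p.1 + η} = {p | p.1 ^ 2 + p.1 = p.2 ^ 3 + η} := by
    ext p
    exact eq_comm.trans CharTwo.add_eq_iff_eq_add
  have hsum : ∑ y : F, artinSchreierChar F (y ^ 3 + η) = 2 ^ (s + 1) := by
    simp_rw [AddChar.map_add_eq_mul, ← sum_mul, sum_artinSchreierChar_cube_eq hse hF,
      artinSchreierChar_eq_neg_one hη]
    ring
  zify
  rw [hcurve, ncard_sq_add_self_eq (fun y ↦ y ^ 3 + η), hsum, hF]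
  norm_cast

/-- Let `s` be an even positive integer, `q = 2^(2s)`, and
`η ∈ F_q` not of the form `α² + α`. Then
`|{(x, y) ∈ F_q × F_q : y³ = x² + x + η}| = q + 2^(s+1)`, i.e. the curve
`y³ = x² + x + η` is a maximal genus-1 curve over `F_q`. -/
theorem stmt_19 (s : ℕ) (hs : 0 < s) (hse : Even s)
    (q : ℕ) (hq : q = 2 ^ (2 * s))
    (F : Type*) [Field F] [Fintype F] (hF : Fintype.card F = q)
    (η : F) (hη : ∀ α : F, η ≠ α ^ 2 + α) :
    Set.ncard {p : F × F | p.2 ^ 3 = p.1 ^ 2 + p.1 + η} = q + 2 ^ (s + 1) :=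
  stmt_19_general s hse q hq F hF η hη
end
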